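/- arXiv:2106.01388 — 6 statements merged into one kernel-verified Lean document; each statement's English description precedes it below -/
import Mathlib

section
/- Let f(θ) = ⟨ψ| e^{iθG} A e^{-iθG} |ψ⟩ with G Hermitian, G² = r²I, A Hermitian, r > 0. Then for any real shifts γ₁, γ₂: r·[f(θ + γ₁) - f(θ - γ₂)] = ((sin(2rγ₁) + sin(2rγ₂))/2)·f'(θ) - ((cos(2rγ₁) - cos(2rγ₂))/(4r))·f''(θ). (Generalized parameter shift rule.) -/
/-!
Since `G² = r²`, the exponential series splits into `exp (iθG) = cos (rθ) + i sin (rθ) G / r`.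
Hence `f` is a single-frequency sinusoid `P + Q cos (2rθ) + S sin (2rθ)`, whose derivatives are
again sinusoids of frequency `2r`, and the shift rule becomes an identity between such sinusoids
that follows from the addition formulas.
-/

open Matrix Real

theorem NormedSpace.exp_smul_eq_cosh_add_sinh {𝔸 : Type*} [Ring 𝔸] [Algebra ℂ 𝔸]
    [TopologicalSpace 𝔸] [IsTopologicalRing 𝔸] [ContinuousSMul ℂ 𝔸] [T2Space 𝔸]
    {x : 𝔸} {c : ℂ} (hc : c ≠ 0) (hx : x * x = c ^ 2 • (1 : 𝔸)) (z : ℂ) :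
    NormedSpace.exp (z • x) = Complex.cosh (z * c) • (1 : 𝔸) + (Complex.sinh (z * c) / c) • x := by
  have hx_even (k : ℕ) : x ^ (2 * k) = c ^ (2 * k) • (1 : 𝔸) := by
    rw [pow_mul, sq, hx, smul_pow, one_pow, ← pow_mul]
  rw [NormedSpace.exp_eq_tsum ℂ]
  refine HasSum.tsum_eq (HasSum.even_add_odd ?_ ?_)
  · refine ((Complex.hasSum_cosh (z * c)).smul_const (1 : 𝔸)).congr_fun fun k => ?_
    rw [smul_pow, hx_even, smul_smul, smul_smul]
    congr 1
    ring
  · refine (((Complex.hasSum_sinh (z * c)).div_const c).smul_const x).congr_fun fun k => ?_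
    rw [smul_pow, pow_succ x, hx_even, smul_mul_assoc, one_mul, smul_smul, smul_smul]
    congr 1
    field_simp
    ring

theorem exp_I_smul_mul_mul_exp_neg_I_smul {𝔸 : Type*} [Ring 𝔸] [Algebra ℂ 𝔸]
    [TopologicalSpace 𝔸] [IsTopologicalRing 𝔸] [ContinuousSMul ℂ 𝔸] [T2Space 𝔸]
    {x : 𝔸} {r : ℝ} (hr : r ≠ 0) (hx : x * x = (r : ℂ) ^ 2 • (1 : 𝔸)) (a : 𝔸) (t : ℝ) :
    NormedSpace.exp ((Complex.I * t) • x) * a * NormedSpace.exp ((-(Complex.I * t)) • x) =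
      ((Real.cos (r * t) ^ 2 : ℝ) : ℂ) • a
        + ((Real.cos (r * t) * Real.sin (r * t) : ℝ) : ℂ) • ((Complex.I / r) • (x * a - a * x))
        + ((Real.sin (r * t) ^ 2 : ℝ) : ℂ) • (((r : ℂ) ^ 2)⁻¹ • (x * a * x)) := by
  have hrC : (r : ℂ) ≠ 0 := Complex.ofReal_ne_zero.mpr hr
  have hcosh : Complex.cosh (Complex.I * t * r) = Real.cos (r * t) := by
    rw [show Complex.I * t * r = (r * t : ℝ) * Complex.I by push_cast; ring, Complex.cosh_mul_I,
      Complex.ofReal_cos]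
  have hsinh : Complex.sinh (Complex.I * t * r) = Real.sin (r * t) * Complex.I := by
    rw [show Complex.I * t * r = (r * t : ℝ) * Complex.I by push_cast; ring, Complex.sinh_mul_I,
      Complex.ofReal_sin]
  rw [NormedSpace.exp_smul_eq_cosh_add_sinh hrC hx, NormedSpace.exp_smul_eq_cosh_add_sinh hrC hx,
    neg_mul, Complex.cosh_neg, Complex.sinh_neg, hcosh, hsinh]
  simp only [add_mul, mul_add, smul_mul_assoc, mul_smul_comm, one_mul, mul_one, smul_smul,
    smul_sub, mul_assoc]
  match_scalars
  · ring
  · ring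
  · ring
  · linear_combination -(Complex.sin (r * t) / r) ^ 2 * Complex.I_sq

noncomputable def sinusoid (ω P Q S : ℝ) (t : ℝ) : ℝ := P + Q * cos (ω * t) + S * sin (ω * t)

theorem hasDerivAt_sinusoid (ω P Q S t : ℝ) :
    HasDerivAt (sinusoid ω P Q S) (sinusoid ω 0 (ω * S) (-(ω * Q)) t) t := by
  have hω : HasDerivAt (fun u : ℝ => ω * u) ω t := by
    simpa using (hasDerivAt_id t).const_mul ω
  have hcos := ((hasDerivAt_cos (ω * t)).comp t hω).const_mul Q
  have hsin := ((hasDerivAt_sin (ω * t)).comp t hω).const_mul S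
  unfold sinusoid
  exact ((hcos.const_add P).add hsin).congr_deriv (by ring)

theorem deriv_sinusoid (ω P Q S : ℝ) :
    deriv (sinusoid ω P Q S) = sinusoid ω 0 (ω * S) (-(ω * Q)) :=
  funext fun t => (hasDerivAt_sinusoid ω P Q S t).deriv

theorem sinusoid_shift_rule {r : ℝ} (hr : r ≠ 0) (P Q S θ γ₁ γ₂ : ℝ) :
    r * (sinusoid (2 * r) P Q S (θ + γ₁) - sinusoid (2 * r) P Q S (θ - γ₂)) =
      ((sin (2 * r * γ₁) + sin (2 * r * γ₂)) / 2) * deriv (sinusoid (2 * r) P Q S) θ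
        - ((cos (2 * r * γ₁) - cos (2 * r * γ₂)) / (4 * r)) *
            deriv (deriv (sinusoid (2 * r) P Q S)) θ := by
  simp only [deriv_sinusoid, sinusoid, mul_add, mul_sub, cos_add, sin_add, cos_sub, sin_sub]
  field_simp
  ring

theorem cos_sin_quadratic_eq_sinusoid (ω a b c t : ℝ) :
    cos (ω * t) ^ 2 * a + cos (ω * t) * sin (ω * t) * b + sin (ω * t) ^ 2 * c =
      sinusoid (2 * ω) ((a + c) / 2) ((a - c) / 2) (b / 2) t := by
  rw [sinusoid, mul_assoc 2 ω t, cos_two_mul, sin_two_mul]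
  linear_combination c * sin_sq_add_cos_sq (ω * t)

theorem re_dotProduct_conj_exp_mulVec_eq_sinusoid {ι : Type*} [Fintype ι] [DecidableEq ι]
    (ψ : ι → ℂ) (A G : Matrix ι ι ℂ) {r : ℝ} (hr : r ≠ 0)
    (hG : G * G = (r : ℂ) ^ 2 • (1 : Matrix ι ι ℂ)) :
    ∃ P Q S : ℝ, ∀ t : ℝ,
      (star ψ ⬝ᵥ ((NormedSpace.exp ((Complex.I * t) • G) * A *
        NormedSpace.exp ((-(Complex.I * t)) • G)) *ᵥ ψ)).re = sinusoid (2 * r) P Q S t := by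
  simp only [exp_I_smul_mul_mul_exp_neg_I_smul hr hG, add_mulVec, smul_mulVec, dotProduct_add,
    dotProduct_smul, smul_eq_mul, Complex.add_re, Complex.re_ofReal_mul]
  exact ⟨_, _, _, cos_sin_quadratic_eq_sinusoid r _ _ _⟩

theorem stmt_2_general {n : ℕ} (ψ : Fin n → ℂ)
    (A G : Matrix (Fin n) (Fin n) ℂ)
    (r : ℝ) (hr : 0 < r)
    (hG2 : G * G = ((r : ℂ) ^ 2) • (1 : Matrix (Fin n) (Fin n) ℂ))
    (f : ℝ → ℝ)
    (hf : ∀ θ : ℝ, f θ =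
      (star ψ ⬝ᵥ ((NormedSpace.exp ((Complex.I * (θ : ℂ)) • G) * A *
        NormedSpace.exp ((-(Complex.I * (θ : ℂ))) • G)) *ᵥ ψ)).re) (θ γ₁ γ₂ : ℝ) :
    r * (f (θ + γ₁) - f (θ - γ₂)) =
      ((Real.sin (2 * r * γ₁) + Real.sin (2 * r * γ₂)) / 2) * deriv f θ
        - ((Real.cos (2 * r * γ₁) - Real.cos (2 * r * γ₂)) / (4 * r)) *
            deriv (deriv f) θ := by
  obtain ⟨P, Q, S, hPQS⟩ := re_dotProduct_conj_exp_mulVec_eq_sinusoid ψ A G hr.ne' hG2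
  obtain rfl : f = sinusoid (2 * r) P Q S := funext fun t => (hf t).trans (hPQS t)
  exact sinusoid_shift_rule hr.ne' P Q S θ γ₁ γ₂

theorem stmt_2 {n : ℕ} (ψ : Fin n → ℂ) (hψ : star ψ ⬝ᵥ ψ = 1)
    (A G : Matrix (Fin n) (Fin n) ℂ) (hA : A.IsHermitian) (hG : G.IsHermitian)
    (r : ℝ) (hr : 0 < r)
    (hG2 : G * G = ((r : ℂ) ^ 2) • (1 : Matrix (Fin n) (Fin n) ℂ))
    (f : ℝ → ℝ)
    (hf : ∀ θ : ℝ, f θ =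
      (star ψ ⬝ᵥ ((NormedSpace.exp ((Complex.I * (θ : ℂ)) • G) * A *
        NormedSpace.exp ((-(Complex.I * (θ : ℂ))) • G)) *ᵥ ψ)).re) (θ γ₁ γ₂ : ℝ) :
    r * (f (θ + γ₁) - f (θ - γ₂)) =
      ((Real.sin (2 * r * γ₁) + Real.sin (2 * r * γ₂)) / 2) * deriv f θ
        - ((Real.cos (2 * r * γ₁) - Real.cos (2 * r * γ₂)) / (4 * r)) *
            deriv (deriv f) θ :=
  stmt_2_general ψ A G r hr hG2 f hf θ γ₁ γ₂
end

section
/- Let f(θ) = ⟨ψ| e^{iθG} A e^{-iθG} |ψ⟩ with G² = r²I. Then for any γ ∈ ℝ with sin(2rγ) ≠ 0, the centered parameter shift rule holds exactly: f'(θ) = r·[f(θ + γ) - f(θ - γ)] / sin(2rγ). -/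
/-!
Since `G² = r²`, the exponential has the closed form `e^{iθG} = cos (rθ) + i sin (rθ) / r • G`,
so the conjugated observable `e^{iθG} A e^{-iθG}`, and with it `f`, is a trigonometric polynomial
`a + b cos (2rθ) + c sin (2rθ)` of the single frequency `2r`. For such a function the symmetric
difference `f (θ + γ) - f (θ - γ) = 2 sin (2rγ) (c cos (2rθ) - b sin (2rθ))` is exactly
`sin (2rγ) / r` times the derivative.
-/

open Matrix

section
open NormedSpace Complex

variable {𝔸 : Type*} [Ring 𝔸] [Algebra ℂ 𝔸] [TopologicalSpace 𝔸] [IsTopologicalRing 𝔸]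
  [T2Space 𝔸] [ContinuousSMul ℂ 𝔸] {x : 𝔸} {c : ℂ}

theorem exp_I_mul_smul_of_mul_self_eq (hc : c ≠ 0) (hx : x * x = c ^ 2 • 1) (z : ℂ) :
    exp ((I * z) • x) = cos (c * z) • 1 + (I * sin (c * z) / c) • x := by
  have h_even (k : ℕ) : x ^ (2 * k) = (c ^ 2) ^ k • 1 := by
    rw [pow_mul, sq, hx, smul_pow, one_pow]
  rw [exp_eq_tsum ℂ]
  refine HasSum.tsum_eq (HasSum.even_add_odd ?_ ?_)
  · convert (hasSum_cos' (c * z)).smul_const (1 : 𝔸) using 2 with k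
    rw [smul_pow, h_even, smul_smul, smul_smul]
    congr 1
    ring
  · convert ((hasSum_sin' (c * z)).mul_right (I / c)).smul_const x using 2 with k
    · rw [smul_pow, pow_succ x, h_even, smul_mul_assoc, one_mul, smul_smul, smul_smul]
      congr 1
      field_simp
      ring
    · ring_nf

theorem exp_I_mul_smul_conj_of_mul_self_eq (hc : c ≠ 0) (hx : x * x = c ^ 2 • 1) (a : 𝔸)
    (z : ℂ) :
    exp ((I * z) • x) * a * exp ((-(I * z)) • x) =
      (2⁻¹ : ℂ) • (a + (c ^ 2)⁻¹ • (x * a * x)) +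
        cos (2 * c * z) • (2⁻¹ : ℂ) • (a - (c ^ 2)⁻¹ • (x * a * x)) +
        sin (2 * c * z) • (I / (2 * c)) • (x * a - a * x) := by
  rw [← mul_neg, exp_I_mul_smul_of_mul_self_eq hc hx, exp_I_mul_smul_of_mul_self_eq hc hx,
    mul_neg, cos_neg, sin_neg, show 2 * c * z = 2 * (c * z) by ring, cos_two_mul, sin_two_mul]
  simp only [add_mul, mul_add, smul_mul_assoc, mul_smul_comm, one_mul, mul_one]
  have h_pyth := sin_sq_add_cos_sq (c * z)
  match_scalars <;> field_simp
  · ring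
  · linear_combination 2 * h_pyth - 2 * sin (c * z) ^ 2 * I_sq

end

open Real in
theorem deriv_eq_shift_of_eq_add_cos_add_sin {f : ℝ → ℝ} {a b c r γ : ℝ}
    (hf : ∀ θ, f θ = a + b * cos (2 * r * θ) + c * sin (2 * r * θ))
    (hγ : sin (2 * r * γ) ≠ 0) (θ : ℝ) :
    deriv f θ = r * (f (θ + γ) - f (θ - γ)) / sin (2 * r * γ) := by
  have h_lin : HasDerivAt (fun θ => 2 * r * θ) (2 * r) θ := by
    simpa using (hasDerivAt_id θ).const_mul (2 * r)
  have h_deriv : HasDerivAt f (2 * r * (c * cos (2 * r * θ) - b * sin (2 * r * θ))) θ := by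
    rw [funext hf]
    exact (((h_lin.cos.const_mul b).const_add a).fun_add (h_lin.sin.const_mul c)).congr_deriv
      (by ring)
  have h_shift : f (θ + γ) - f (θ - γ) =
      2 * sin (2 * r * γ) * (c * cos (2 * r * θ) - b * sin (2 * r * θ)) := by
    simp only [hf, mul_add, mul_sub, cos_add, sin_add, cos_sub, sin_sub]
    ring
  rw [h_deriv.deriv, h_shift]
  field_simp

theorem stmt_3_general {n : ℕ} (ψ : Fin n → ℂ)
    (A G : Matrix (Fin n) (Fin n) ℂ)
    (r : ℝ)
    (hG2 : G * G = ((r : ℂ) ^ 2) • (1 : Matrix (Fin n) (Fin n) ℂ))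
    (f : ℝ → ℝ)
    (hf : ∀ θ : ℝ, f θ =
      (star ψ ⬝ᵥ ((NormedSpace.exp ((Complex.I * (θ : ℂ)) • G) * A *
        NormedSpace.exp ((-(Complex.I * (θ : ℂ))) • G)) *ᵥ ψ)).re) (θ γ : ℝ) (hγ : Real.sin (2 * r * γ) ≠ 0) :
    deriv f θ = r * (f (θ + γ) - f (θ - γ)) / Real.sin (2 * r * γ) := by
  have hr : (r : ℂ) ≠ 0 := by
    rintro h
    simp [Complex.ofReal_eq_zero.mp h] at hγ
  refine deriv_eq_shift_of_eq_add_cos_add_sin (a := ?a) (b := ?b) (c := ?c) (fun t => ?h) hγ θ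
  case h =>
    rw [hf, exp_I_mul_smul_conj_of_mul_self_eq hr hG2,
      show 2 * (r : ℂ) * t = ((2 * r * t : ℝ) : ℂ) by push_cast; ring, ← Complex.ofReal_cos,
      ← Complex.ofReal_sin]
    simp only [add_mulVec, smul_mulVec, dotProduct_add, dotProduct_smul, smul_eq_mul,
      Complex.add_re, Complex.re_ofReal_mul]
    rw [mul_comm (Real.cos _), mul_comm (Real.sin _)]

theorem stmt_3 {n : ℕ} (ψ : Fin n → ℂ) (hψ : star ψ ⬝ᵥ ψ = 1)
    (A G : Matrix (Fin n) (Fin n) ℂ) (hA : A.IsHermitian) (hG : G.IsHermitian)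
    (r : ℝ) (hr : 0 < r)
    (hG2 : G * G = ((r : ℂ) ^ 2) • (1 : Matrix (Fin n) (Fin n) ℂ))
    (f : ℝ → ℝ)
    (hf : ∀ θ : ℝ, f θ =
      (star ψ ⬝ᵥ ((NormedSpace.exp ((Complex.I * (θ : ℂ)) • G) * A *
        NormedSpace.exp ((-(Complex.I * (θ : ℂ))) • G)) *ᵥ ψ)).re) (θ γ : ℝ) (hγ : Real.sin (2 * r * γ) ≠ 0) :
    deriv f θ = r * (f (θ + γ) - f (θ - γ)) / Real.sin (2 * r * γ) :=
  stmt_3_general ψ A G r hG2 f hf θ γ hγ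
end

section
/- Let f(θ) = ⟨ψ| e^{iθG} A e^{-iθG} |ψ⟩ with G Hermitian and G² = r²I, A Hermitian. Then f satisfies the differential equation f'''(θ) = -4r²·f'(θ) for all θ; consequently for every n ∈ ℕ, f^{(n+2)} = -4r²·f^{(n)} holds for all derivatives of order n ≥ 1. -/
/-!
Differentiating the Heisenberg-picture observable `exp (t • X) * B * exp (-(t • X))` replaces `B`
by the commutator `⁅X, B⁆`, so the `k`-th derivative of `f` is the expectation of `(ad X)^k A`,
where `X = I • G`. Since `X * X = -r² • 1` is a scalar,
`⁅X, ⁅X, ⁅X, B⁆⁆⁆ = X³B - 3X²BX + 3XBX² - BX³ = -4r² ⁅X, B⁆`, and applying `(ad X)^(m-1)` to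
this gives the recurrence in every order `m ≥ 1`.
-/

open Matrix NormedSpace

section

attribute [local instance] LieRing.ofAssociativeRing

section Algebra

variable {R A : Type*} [CommRing R] [Ring A] [Algebra R A]

theorem lie_lie_lie_of_mul_self_eq_smul_one {X : A} {c : R} (hX : X * X = c • 1) (B : A) :
    ⁅X, ⁅X, ⁅X, B⁆⁆⁆ = (4 * c) • ⁅X, B⁆ := by
  have hXXB : X * X * B = c • B := by rw [hX, smul_one_mul]
  have hBXX : B * X * X = c • B := by rw [mul_assoc, hX, mul_smul_one]
  have hXBXX : X * B * X * X = c • (X * B) := by rw [mul_assoc _ X, hX, mul_smul_one]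
  simp only [Ring.lie_def, mul_sub, sub_mul, ← mul_assoc, hXXB, hBXX, hXBXX, mul_smul_comm,
    smul_mul_assoc]
  module

theorem ad_pow_add_two_of_mul_self_eq_smul_one {X : A} {c : R} (hX : X * X = c • 1)
    {m : ℕ} (hm : 1 ≤ m) :
    LieAlgebra.ad R A X ^ (m + 2) = (4 * c) • LieAlgebra.ad R A X ^ m := by
  obtain ⟨k, rfl⟩ := Nat.exists_eq_add_of_le' hm
  have h3 : LieAlgebra.ad R A X ^ 3 = (4 * c) • LieAlgebra.ad R A X := by
    ext B
    simpa [pow_succ, LieAlgebra.ad_apply] using lie_lie_lie_of_mul_self_eq_smul_one hX B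
  rw [show k + 1 + 2 = k + 3 by ring, pow_add, h3, mul_smul_comm, ← pow_succ]

end Algebra

section Analysis

variable {𝔸 F : Type*} [NormedRing 𝔸] [NormedAlgebra ℝ 𝔸] [CompleteSpace 𝔸]
  [NormedAddCommGroup F] [NormedSpace ℝ F]

theorem hasDerivAt_exp_smul_mul_mul_exp_neg_smul (X B : 𝔸) (t : ℝ) :
    HasDerivAt (fun u : ℝ => exp (u • X) * B * exp (-(u • X)))
      (exp (t • X) * ⁅X, B⁆ * exp (-(t • X))) t := by
  have h := ((hasDerivAt_exp_smul_const X t).mul_const B).mul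
    (hasDerivAt_exp_smul_const' (-X) t)
  simp only [smul_neg] at h
  refine h.congr_deriv ?_
  rw [Ring.lie_def]
  noncomm_ring

theorem iteratedDeriv_comp_exp_smul_mul_mul_exp_neg_smul (φ : 𝔸 →L[ℝ] F) (X : 𝔸) (k : ℕ)
    (B : 𝔸) :
    iteratedDeriv k (fun t : ℝ => φ (exp (t • X) * B * exp (-(t • X)))) =
      fun t => φ (exp (t • X) * (LieAlgebra.ad ℝ 𝔸 X ^ k) B * exp (-(t • X))) := by
  induction k generalizing B with
  | zero => simp
  | succ k ih =>
    have hderiv : deriv (fun t : ℝ => φ (exp (t • X) * B * exp (-(t • X)))) =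
        fun t => φ (exp (t • X) * ⁅X, B⁆ * exp (-(t • X))) :=
      funext fun t => (φ.hasFDerivAt.comp_hasDerivAt t
        (hasDerivAt_exp_smul_mul_mul_exp_neg_smul X B t)).deriv
    rw [iteratedDeriv_succ', hderiv, ih, pow_succ, Module.End.mul_apply, LieAlgebra.ad_apply]

theorem iteratedDeriv_add_two_eq_of_mul_self_eq_smul_one (φ : 𝔸 →L[ℝ] F) {X : 𝔸}
    {c : ℝ} (hX : X * X = c • 1) {m : ℕ} (hm : 1 ≤ m) (B : 𝔸) {f : ℝ → F}
    (hf : ∀ t, f t = φ (exp (t • X) * B * exp (-(t • X)))) :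
    iteratedDeriv (m + 2) f = (4 * c) • iteratedDeriv m f := by
  simp only [funext hf, iteratedDeriv_comp_exp_smul_mul_mul_exp_neg_smul,
    ad_pow_add_two_of_mul_self_eq_smul_one hX hm]
  funext t
  simp

end Analysis

end

noncomputable def Matrix.reExpectation {ι : Type*} [Fintype ι] (ψ : ι → ℂ) :
    Matrix ι ι ℂ →L[ℝ] ℝ where
  toFun M := (star ψ ⬝ᵥ (M *ᵥ ψ)).re
  map_add' M N := by simp [add_mulVec, dotProduct_add]
  map_smul' a M := by simp [smul_mulVec, dotProduct_smul]
  cont := by fun_prop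

theorem stmt_5_general {n : ℕ} (ψ : Fin n → ℂ) (A G : Matrix (Fin n) (Fin n) ℂ) (r : ℝ)
    (hG2 : G * G = ((r : ℂ) ^ 2) • (1 : Matrix (Fin n) (Fin n) ℂ))
    (f : ℝ → ℝ)
    (hf : ∀ θ : ℝ, f θ =
      (star ψ ⬝ᵥ ((NormedSpace.exp ((Complex.I * (θ : ℂ)) • G) * A *
        NormedSpace.exp ((-(Complex.I * (θ : ℂ))) • G)) *ᵥ ψ)).re) :
    (∀ θ : ℝ, iteratedDeriv 3 f θ = -(4 * r ^ 2) * deriv f θ) ∧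
      ∀ m : ℕ, 1 ≤ m → ∀ θ : ℝ,
        iteratedDeriv (m + 2) f θ = -(4 * r ^ 2) * iteratedDeriv m f θ := by
  have hX : (Complex.I • G) * (Complex.I • G) = (-r ^ 2) • (1 : Matrix (Fin n) (Fin n) ℂ) := by
    rw [smul_mul_smul_comm, hG2, smul_smul, ← Complex.coe_smul]
    push_cast
    rw [Complex.I_mul_I]
    ring_nf
  have hf' : ∀ θ : ℝ, f θ = Matrix.reExpectation ψ
      (exp (θ • Complex.I • G) * A * exp (-(θ • Complex.I • G))) := by
    intro θ
    rw [hf θ, ← Complex.coe_smul, smul_smul, neg_smul, mul_comm]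
    rfl
  have recurrence : ∀ m : ℕ, 1 ≤ m → ∀ θ : ℝ,
      iteratedDeriv (m + 2) f θ = -(4 * r ^ 2) * iteratedDeriv m f θ := by
    intro m hm θ
    open scoped Matrix.Norms.Operator in
    rw [iteratedDeriv_add_two_eq_of_mul_self_eq_smul_one (Matrix.reExpectation ψ) hX hm A hf',
      Pi.smul_apply, smul_eq_mul]
    ring
  exact ⟨fun θ => by simpa using recurrence 1 le_rfl θ, recurrence⟩

theorem stmt_5 {n : ℕ} (ψ : Fin n → ℂ) (hψ : star ψ ⬝ᵥ ψ = 1)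
    (A G : Matrix (Fin n) (Fin n) ℂ) (hA : A.IsHermitian) (hG : G.IsHermitian)
    (r : ℝ) (hr : 0 < r)
    (hG2 : G * G = ((r : ℂ) ^ 2) • (1 : Matrix (Fin n) (Fin n) ℂ))
    (f : ℝ → ℝ)
    (hf : ∀ θ : ℝ, f θ =
      (star ψ ⬝ᵥ ((NormedSpace.exp ((Complex.I * (θ : ℂ)) • G) * A *
        NormedSpace.exp ((-(Complex.I * (θ : ℂ))) • G)) *ᵥ ψ)).re) :
    (∀ θ : ℝ, iteratedDeriv 3 f θ = -(4 * r ^ 2) * deriv f θ) ∧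
      ∀ m : ℕ, 1 ≤ m → ∀ θ : ℝ,
        iteratedDeriv (m + 2) f θ = -(4 * r ^ 2) * iteratedDeriv m f θ :=
  stmt_5_general ψ A G r hG2 f hf
end

section
/- Let f(θ) = ⟨ψ| e^{iθG} A e^{-iθG} |ψ⟩ with G² = r²I. Then for any h > 0, the bias of the centered finite-difference estimator equals [f(θ+h) - f(θ-h)]/(2h) - f'(θ) = (sin(2rh)/(2rh) - 1)·f'(θ). -/
/-!
Since `G² = r²`, the matrix `J = (i / r) G` satisfies `J² = -1`, so
`e^{iθG} = cos (rθ) + sin (rθ) J`, and conjugating `A` by it produces only the frequency `2r`: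
`f θ = c + α cos (2rθ) + β sin (2rθ)`.
For a pure sinusoid of frequency `ω` one has `f (θ + h) - f (θ - h) = 2 sin (ωh) · f' θ / ω`,
so the centered difference is exactly `sin (ωh) / (ωh)` times the derivative.
-/

open Matrix
open scoped Nat

theorem mul_self_eq_neg_one_of_mul_self_eq_sq {𝔸 : Type*} [Ring 𝔸] [Algebra ℂ 𝔸] {G : 𝔸} {r : ℂ}
    (hr : r ≠ 0) (hG : G * G = r ^ 2 • (1 : 𝔸)) :
    ((Complex.I / r) • G) * ((Complex.I / r) • G) = -1 := by
  rw [smul_mul_smul_comm, hG, smul_smul, div_mul_div_comm, Complex.I_mul_I, ← sq,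
    div_mul_cancel₀ _ (pow_ne_zero 2 hr), neg_one_smul]

section
variable {𝔸 : Type*} [Ring 𝔸] [Algebra ℂ 𝔸] [TopologicalSpace 𝔸] [IsTopologicalRing 𝔸]
  [ContinuousSMul ℂ 𝔸] [T2Space 𝔸]

theorem exp_smul_of_mul_self_eq_neg_one {J : 𝔸} (hJ : J * J = -1) (a : ℂ) :
    NormedSpace.exp (a • J) = Complex.cos a • (1 : 𝔸) + Complex.sin a • J := by
  have hJ_pow_even : ∀ k : ℕ, J ^ (2 * k) = (-1 : ℂ) ^ k • (1 : 𝔸) := fun k => by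
    rw [pow_mul, sq, hJ, ← neg_one_smul ℂ (1 : 𝔸), smul_pow, one_pow]
  have heven : HasSum (fun k : ℕ => ((2 * k)! : ℂ)⁻¹ • (a • J) ^ (2 * k))
      (Complex.cos a • (1 : 𝔸)) := by
    refine ((Complex.hasSum_cos a).smul_const (1 : 𝔸)).congr_fun fun k => ?_
    rw [smul_pow, hJ_pow_even, smul_smul, smul_smul]
    congr 1
    ring
  have hodd : HasSum (fun k : ℕ => ((2 * k + 1)! : ℂ)⁻¹ • (a • J) ^ (2 * k + 1))
      (Complex.sin a • J) := by
    refine ((Complex.hasSum_sin a).smul_const J).congr_fun fun k => ?_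
    rw [smul_pow, pow_succ J, hJ_pow_even, smul_mul_assoc, one_mul, smul_smul, smul_smul]
    congr 1
    ring
  rw [NormedSpace.exp_eq_tsum ℂ]
  exact (HasSum.even_add_odd (f := fun n => (n ! : ℂ)⁻¹ • (a • J) ^ n) heven hodd).tsum_eq

theorem exp_smul_mul_mul_exp_neg_smul_of_mul_self_eq_neg_one {J : 𝔸} (hJ : J * J = -1)
    (A : 𝔸) (a : ℂ) :
    NormedSpace.exp (a • J) * A * NormedSpace.exp ((-a) • J)
      = (2⁻¹ : ℂ) • (A - J * A * J) + Complex.cos (2 * a) • (2⁻¹ : ℂ) • (A + J * A * J)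
        + Complex.sin (2 * a) • (2⁻¹ : ℂ) • (J * A - A * J) := by
  rw [exp_smul_of_mul_self_eq_neg_one hJ, exp_smul_of_mul_self_eq_neg_one hJ, Complex.cos_neg,
    Complex.sin_neg, neg_smul, ← sub_eq_add_neg, Complex.cos_two_mul, Complex.sin_two_mul]
  simp only [add_mul, sub_mul, mul_sub, smul_mul_assoc, mul_smul_comm, one_mul, mul_one, smul_smul]
  linear_combination (norm := module) -(Complex.sin_sq_add_cos_sq a • (J * A * J))

end

theorem centered_difference_of_sinusoid {f : ℝ → ℝ} {c α β ω : ℝ}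
    (hf : ∀ x, f x = c + α * Real.cos (ω * x) + β * Real.sin (ω * x)) (θ h : ℝ) :
    (f (θ + h) - f (θ - h)) / (2 * h) = Real.sin (ω * h) / (ω * h) * deriv f θ := by
  have hderiv : HasDerivAt f (ω * (β * Real.cos (ω * θ) - α * Real.sin (ω * θ))) θ := by
    have hlin : HasDerivAt (fun x => ω * x) ω θ := by simpa using (hasDerivAt_id θ).const_mul ω
    rw [show f = fun x => c + α * Real.cos (ω * x) + β * Real.sin (ω * x) from funext hf]
    refine (((hlin.cos.const_mul α).const_add c).add (hlin.sin.const_mul β)).congr_deriv ?_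
    ring
  have hdiff : f (θ + h) - f (θ - h)
      = 2 * Real.sin (ω * h) * (β * Real.cos (ω * θ) - α * Real.sin (ω * θ)) := by
    simp only [hf, mul_add, mul_sub, Real.cos_add, Real.cos_sub, Real.sin_add, Real.sin_sub]
    ring
  rw [hderiv.deriv, hdiff]
  -- the degenerate cases `ω = 0` and `h = 0` hold through `x / 0 = 0`
  rcases eq_or_ne ω 0 with rfl | hω
  · simp
  rcases eq_or_ne h 0 with rfl | hh
  · simp
  field_simp

theorem stmt_7_general {n : ℕ} (ψ : Fin n → ℂ)
    (A G : Matrix (Fin n) (Fin n) ℂ)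
    (r : ℝ) (hr : 0 < r)
    (hG2 : G * G = ((r : ℂ) ^ 2) • (1 : Matrix (Fin n) (Fin n) ℂ))
    (f : ℝ → ℝ)
    (hf : ∀ θ : ℝ, f θ =
      (star ψ ⬝ᵥ ((NormedSpace.exp ((Complex.I * (θ : ℂ)) • G) * A *
        NormedSpace.exp ((-(Complex.I * (θ : ℂ))) • G)) *ᵥ ψ)).re) (θ : ℝ) (h : ℝ) :
    (f (θ + h) - f (θ - h)) / (2 * h) - deriv f θ
      = (Real.sin (2 * r * h) / (2 * r * h) - 1) * deriv f θ := by
  have hr0 : (r : ℂ) ≠ 0 := Complex.ofReal_ne_zero.mpr hr.ne'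
  set J : Matrix (Fin n) (Fin n) ℂ := (Complex.I / r) • G
  have hJ : J * J = -1 := mul_self_eq_neg_one_of_mul_self_eq_sq hr0 hG2
  have hGJ : ∀ x : ℝ, (Complex.I * x) • G = ((r * x : ℝ) : ℂ) • J := fun x => by
    rw [smul_smul]
    congr 1
    push_cast
    field_simp
  let expect : Matrix (Fin n) (Fin n) ℂ → ℝ := fun M => (star ψ ⬝ᵥ (M *ᵥ ψ)).re
  have hsinusoid : ∀ x, f x = expect ((2⁻¹ : ℂ) • (A - J * A * J))
      + expect ((2⁻¹ : ℂ) • (A + J * A * J)) * Real.cos (2 * r * x)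
      + expect ((2⁻¹ : ℂ) • (J * A - A * J)) * Real.sin (2 * r * x) := fun x => by
    have hangle : 2 * ((r * x : ℝ) : ℂ) = ((2 * r * x : ℝ) : ℂ) := by push_cast; ring
    rw [hf, neg_smul, hGJ, ← neg_smul, exp_smul_mul_mul_exp_neg_smul_of_mul_self_eq_neg_one hJ,
      hangle, ← Complex.ofReal_cos, ← Complex.ofReal_sin]
    simp only [expect, add_mulVec, smul_mulVec, dotProduct_add, dotProduct_smul, smul_eq_mul,
      Complex.add_re, Complex.re_ofReal_mul]
    ring
  rw [centered_difference_of_sinusoid hsinusoid]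
  ring

theorem stmt_7 {n : ℕ} (ψ : Fin n → ℂ) (hψ : star ψ ⬝ᵥ ψ = 1)
    (A G : Matrix (Fin n) (Fin n) ℂ) (hA : A.IsHermitian) (hG : G.IsHermitian)
    (r : ℝ) (hr : 0 < r)
    (hG2 : G * G = ((r : ℂ) ^ 2) • (1 : Matrix (Fin n) (Fin n) ℂ))
    (f : ℝ → ℝ)
    (hf : ∀ θ : ℝ, f θ =
      (star ψ ⬝ᵥ ((NormedSpace.exp ((Complex.I * (θ : ℂ)) • G) * A *
        NormedSpace.exp ((-(Complex.I * (θ : ℂ))) • G)) *ᵥ ψ)).re) (θ : ℝ) (h : ℝ) (hh : 0 < h) :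
    (f (θ + h) - f (θ - h)) / (2 * h) - deriv f θ
      = (Real.sin (2 * r * h) / (2 * r * h) - 1) * deriv f θ :=
  stmt_7_general ψ A G r hr hG2 f hf θ h
end

section
/- Let f(θ) = ⟨ψ| e^{iθG} A e^{-iθG} |ψ⟩ with G² = r²I, and let |φ(θ)⟩ = e^{-iθG}|ψ⟩. Then ⟨φ(θ)| G A G |φ(θ)⟩ / r² = f(θ + π/(2r)) for all θ. -/
/-!
Since `G² = r²`, the exponential series of `z • G` collapses to
`exp (z • G) = cosh (z r) + (sinh (z r) / r) • G`. At the quarter period `z = i π / (2 r)` this is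
`(i / r) • G`, so conjugating by `exp (i (π / (2 r)) G)` sends `A` to `G A G / r²`. Since the
conjugations `A ↦ exp (i t G) A exp (-i t G)` form a one-parameter group, shifting `θ` by
`π / (2 r)` in `f` replaces `A` by `G A G / r²`.
-/

open Matrix Complex

section ExpOfSquareScalar

variable {𝔸 : Type*} [Ring 𝔸] [Algebra ℂ 𝔸] [TopologicalSpace 𝔸] [IsTopologicalRing 𝔸]
  [ContinuousSMul ℂ 𝔸] [T2Space 𝔸]

theorem exp_smul_of_mul_self_eq_one {J : 𝔸} (hJ : J * J = 1) (w : ℂ) :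
    NormedSpace.exp (w • J) = cosh w • (1 : 𝔸) + sinh w • J := by
  have heven : ∀ k : ℕ, (((2 * k).factorial : ℂ))⁻¹ • (w • J) ^ (2 * k)
      = (w ^ (2 * k) / ((2 * k).factorial : ℂ)) • (1 : 𝔸) := by
    intro k
    rw [smul_pow, pow_mul J, sq, hJ, one_pow, smul_smul, inv_mul_eq_div]
  have hodd : ∀ k : ℕ, (((2 * k + 1).factorial : ℂ))⁻¹ • (w • J) ^ (2 * k + 1)
      = (w ^ (2 * k + 1) / ((2 * k + 1).factorial : ℂ)) • J := by
    intro k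
    rw [smul_pow, pow_succ J, pow_mul J, sq, hJ, one_pow, one_mul, smul_smul, inv_mul_eq_div]
  rw [NormedSpace.exp_eq_tsum ℂ]
  refine HasSum.tsum_eq (HasSum.even_add_odd ?_ ?_)
  · simpa only [heven] using (hasSum_cosh w).smul_const (1 : 𝔸)
  · simpa only [hodd] using (hasSum_sinh w).smul_const J

theorem exp_smul_of_mul_self_eq_sq_smul_one {G : 𝔸} {ρ : ℂ} (hρ : ρ ≠ 0)
    (hG : G * G = ρ ^ 2 • (1 : 𝔸)) (z : ℂ) :
    NormedSpace.exp (z • G) = cosh (z * ρ) • (1 : 𝔸) + (sinh (z * ρ) / ρ) • G := by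
  have hJ : (ρ⁻¹ • G) * (ρ⁻¹ • G) = 1 := by
    rw [smul_mul_smul_comm, hG, smul_smul, ← sq, ← mul_pow, inv_mul_cancel₀ hρ, one_pow, one_smul]
  have hzG : z • G = (z * ρ) • (ρ⁻¹ • G) := by
    rw [smul_smul, mul_assoc, mul_inv_cancel₀ hρ, mul_one]
  rw [hzG, exp_smul_of_mul_self_eq_one hJ, smul_smul, div_eq_mul_inv]

theorem exp_I_mul_pi_div_two_smul {G : 𝔸} {ρ : ℂ} (hρ : ρ ≠ 0)
    (hG : G * G = ρ ^ 2 • (1 : 𝔸)) :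
    NormedSpace.exp ((I * (Real.pi / (2 * ρ))) • G) = (I / ρ) • G := by
  have hquarter : I * (Real.pi / (2 * ρ)) * ρ = (Real.pi / 2 : ℂ) * I := by
    field_simp
  rw [exp_smul_of_mul_self_eq_sq_smul_one hρ hG, hquarter, cosh_mul_I, sinh_mul_I,
    cos_pi_div_two, sin_pi_div_two, zero_smul, zero_add, one_mul]

theorem exp_I_mul_pi_div_two_smul_conj {G : 𝔸} {ρ : ℂ} (hρ : ρ ≠ 0)
    (hG : G * G = ρ ^ 2 • (1 : 𝔸)) (A : 𝔸) :
    NormedSpace.exp ((I * (Real.pi / (2 * ρ))) • G) * A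
        * NormedSpace.exp ((-(I * (Real.pi / (2 * ρ)))) • G) = (ρ ^ 2)⁻¹ • (G * A * G) := by
  -- the backward quarter period for `ρ` is the forward one for `-ρ`
  have hneg : -(I * (Real.pi / (2 * ρ))) = I * (Real.pi / (2 * -ρ)) := by
    rw [mul_neg, div_neg, mul_neg]
  rw [hneg, exp_I_mul_pi_div_two_smul hρ hG,
    exp_I_mul_pi_div_two_smul (neg_ne_zero.mpr hρ) (by rwa [neg_sq]), smul_mul_assoc,
    mul_smul_comm, smul_mul_assoc, smul_smul, div_neg, neg_mul, div_mul_div_comm, I_mul_I,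
    neg_div, neg_neg, ← sq, one_div]

end ExpOfSquareScalar

section Conjugation

variable {m : Type*} [Fintype m] [DecidableEq m]

theorem exp_add_smul_conj (G A : Matrix m m ℂ) (s t : ℂ) :
    NormedSpace.exp ((s + t) • G) * A * NormedSpace.exp ((-(s + t)) • G)
      = NormedSpace.exp (s • G) * (NormedSpace.exp (t • G) * A * NormedSpace.exp ((-t) • G))
          * NormedSpace.exp ((-s) • G) := by
  have hcomm : ∀ a b : ℂ, Commute (a • G) (b • G) :=
    fun a b => ((Commute.refl G).smul_left a).smul_right b
  rw [add_smul, neg_add_rev, add_smul, Matrix.exp_add_of_commute _ _ (hcomm _ _),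
    Matrix.exp_add_of_commute _ _ ((hcomm _ _).symm), Matrix.mul_assoc, Matrix.mul_assoc,
    Matrix.mul_assoc, Matrix.mul_assoc, Matrix.mul_assoc]

theorem Matrix.IsHermitian.conjTranspose_exp_smul {G : Matrix m m ℂ} (hG : G.IsHermitian)
    (z : ℂ) : (NormedSpace.exp (z • G))ᴴ = NormedSpace.exp (star z • G) := by
  rw [← Matrix.exp_conjTranspose, conjTranspose_smul, hG.eq]

end Conjugation

theorem Matrix.star_mulVec_dotProduct_mulVec {m : Type*} [Fintype m] {α : Type*}
    [NonUnitalSemiring α] [StarRing α] (M X : Matrix m m α) (v : m → α) :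
    star (M *ᵥ v) ⬝ᵥ (X *ᵥ (M *ᵥ v)) = star v ⬝ᵥ ((Mᴴ * X * M) *ᵥ v) := by
  rw [star_mulVec, ← dotProduct_mulVec, mulVec_mulVec, mulVec_mulVec, Matrix.mul_assoc]

theorem stmt_10_general {n : ℕ} (ψ : Fin n → ℂ)
    (A G : Matrix (Fin n) (Fin n) ℂ) (hG : G.IsHermitian)
    (r : ℝ) (hr : 0 < r)
    (hG2 : G * G = ((r : ℂ) ^ 2) • (1 : Matrix (Fin n) (Fin n) ℂ))
    (f : ℝ → ℝ)
    (hf : ∀ θ : ℝ, f θ =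
      (star ψ ⬝ᵥ ((NormedSpace.exp ((Complex.I * (θ : ℂ)) • G) * A *
        NormedSpace.exp ((-(Complex.I * (θ : ℂ))) • G)) *ᵥ ψ)).re) (θ : ℝ) :
    (star (NormedSpace.exp ((-(Complex.I * (θ : ℂ))) • G) *ᵥ ψ) ⬝ᵥ
        ((G * A * G) *ᵥ
          (NormedSpace.exp ((-(Complex.I * (θ : ℂ))) • G) *ᵥ ψ))).re / r ^ 2
      = f (θ + Real.pi / (2 * r)) := by
  have hr0 : (r : ℂ) ≠ 0 := ofReal_ne_zero.mpr hr.ne'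
  have hshift : I * ((θ + Real.pi / (2 * r) : ℝ) : ℂ) = I * θ + I * (Real.pi / (2 * r)) := by
    push_cast
    ring
  have hadjoint : (NormedSpace.exp ((-(I * (θ : ℂ))) • G))ᴴ = NormedSpace.exp ((I * θ) • G) := by
    rw [hG.conjTranspose_exp_smul, star_neg, star_mul', star_def, conj_ofReal, conj_I, neg_mul,
      neg_neg]
  rw [hf, hshift, exp_add_smul_conj, exp_I_mul_pi_div_two_smul_conj hr0 hG2, ← hadjoint,
    Matrix.mul_smul, Matrix.smul_mul, smul_mulVec, dotProduct_smul,
    ← star_mulVec_dotProduct_mulVec, smul_eq_mul, ← ofReal_pow, ← ofReal_inv, re_ofReal_mul,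
    div_eq_inv_mul]

theorem stmt_10 {n : ℕ} (ψ : Fin n → ℂ) (hψ : star ψ ⬝ᵥ ψ = 1)
    (A G : Matrix (Fin n) (Fin n) ℂ) (hA : A.IsHermitian) (hG : G.IsHermitian)
    (r : ℝ) (hr : 0 < r)
    (hG2 : G * G = ((r : ℂ) ^ 2) • (1 : Matrix (Fin n) (Fin n) ℂ))
    (f : ℝ → ℝ)
    (hf : ∀ θ : ℝ, f θ =
      (star ψ ⬝ᵥ ((NormedSpace.exp ((Complex.I * (θ : ℂ)) • G) * A *
        NormedSpace.exp ((-(Complex.I * (θ : ℂ))) • G)) *ᵥ ψ)).re) (θ : ℝ) :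
    (star (NormedSpace.exp ((-(Complex.I * (θ : ℂ))) • G) *ᵥ ψ) ⬝ᵥ
        ((G * A * G) *ᵥ
          (NormedSpace.exp ((-(Complex.I * (θ : ℂ))) • G) *ᵥ ψ))).re / r ^ 2
      = f (θ + Real.pi / (2 * r)) :=
  stmt_10_general ψ A G hG r hr hG2 f hf θ
end

section
/- Fix r > 0 and 0 < γ < π/r. There is no function g: ℝ × ℝ → ℝ such that for every unit vector ψ ∈ ℂ² and all Hermitian 2×2 matrices A and G with G² = r²I, the function f(θ) = ⟨ψ| e^{iθG} A e^{-iθG} |ψ⟩ satisfies g(f(θ), f(θ+γ)) = f'(θ) for all θ ∈ [0, π/r). (No-go theorem for forward/backward parameter shift rules.) -/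
/-!
Take `G = diag(r, -r)` and the balanced state `(1, 1)/√2`. Conjugating an observable with
off-diagonal entry `b e^{iφ}` by `e^{iθG}` multiplies that entry by `e^{2irθ}`, so every
sinusoid `a + b cos (2rθ + φ)` is an expectation value of the allowed form. The constant
`cos (rγ)` and `cos (2rθ - rγ)` take the same values at `θ = 0` and `θ = γ`, but their
derivatives at `0` are `0` and `2r sin (rγ) > 0`; so no `g` can compute `f'(0)` from
`(f 0, f γ)`.
-/

open Matrix Complex

section DiagonalConjugation

variable {ι : Type*} [Fintype ι] [DecidableEq ι]

theorem Matrix.exp_smul_diagonal (c : ℂ) (d : ι → ℂ) :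
    NormedSpace.exp (c • diagonal d) = diagonal fun i => cexp (c * d i) := by
  rw [← diagonal_smul, exp_diagonal, Pi.exp_def, Complex.exp_eq_exp_ℂ]
  rfl

theorem Matrix.exp_smul_diagonal_mul_mul_exp_neg_smul_diagonal (c : ℂ) (d : ι → ℂ)
    (A : Matrix ι ι ℂ) :
    NormedSpace.exp (c • diagonal d) * A * NormedSpace.exp (-c • diagonal d) =
      of fun i j => cexp (c * (d i - d j)) * A i j := by
  ext i j
  simp only [exp_smul_diagonal, diagonal_mul, mul_diagonal, of_apply]
  rw [mul_sub, sub_eq_add_neg, Complex.exp_add, ← neg_mul]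
  ring

end DiagonalConjugation

section UniformState

variable {ι : Type*} [Fintype ι]

noncomputable def uniformState (ι : Type*) [Fintype ι] : ι → ℂ :=
  fun _ => ((Real.sqrt (Fintype.card ι))⁻¹ : ℝ)

theorem star_uniformState_dotProduct_mulVec (M : Matrix ι ι ℂ) :
    star (uniformState ι) ⬝ᵥ M *ᵥ uniformState ι = (∑ i, ∑ j, M i j) / Fintype.card ι := by
  have hsq : (((Real.sqrt (Fintype.card ι))⁻¹ : ℝ) : ℂ) ^ 2 = (Fintype.card ι : ℂ)⁻¹ := by
    rw [← ofReal_pow, inv_pow, Real.sq_sqrt (Nat.cast_nonneg _), ofReal_inv, ofReal_natCast]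
  simp only [uniformState, dotProduct, mulVec, Pi.star_apply, star_def, conj_ofReal,
    ← Finset.mul_sum, ← Finset.sum_mul]
  rw [div_eq_mul_inv, ← hsq]
  ring

theorem star_uniformState_dotProduct_self [DecidableEq ι] [Nonempty ι] :
    star (uniformState ι) ⬝ᵥ uniformState ι = 1 := by
  simpa [one_apply] using star_uniformState_dotProduct_mulVec (1 : Matrix ι ι ℂ)

end UniformState

noncomputable def expectation (ψ : Fin 2 → ℂ) (A G : Matrix (Fin 2) (Fin 2) ℂ) (θ : ℝ) : ℝ :=
  (star ψ ⬝ᵥ ((NormedSpace.exp ((I * (θ : ℂ)) • G) * A *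
    NormedSpace.exp ((-(I * (θ : ℂ))) • G)) *ᵥ ψ)).re

def scaledPauliZ (r : ℝ) : Matrix (Fin 2) (Fin 2) ℂ := diagonal ![(r : ℂ), -r]

noncomputable def sinusoidObservable (a b φ : ℝ) : Matrix (Fin 2) (Fin 2) ℂ :=
  !![(a : ℂ), b * cexp (φ * I); b * cexp (-φ * I), a]

theorem scaledPauliZ_isHermitian (r : ℝ) : (scaledPauliZ r).IsHermitian := by
  rw [scaledPauliZ, IsHermitian, diagonal_conjTranspose]
  congr 1
  ext i
  fin_cases i <;> simp

theorem scaledPauliZ_mul_self (r : ℝ) :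
    scaledPauliZ r * scaledPauliZ r = ((r : ℂ) ^ 2) • (1 : Matrix (Fin 2) (Fin 2) ℂ) := by
  rw [scaledPauliZ, diagonal_mul_diagonal, smul_one_eq_diagonal]
  congr 1
  ext i
  fin_cases i <;> simp [sq]

theorem sinusoidObservable_isHermitian (a b φ : ℝ) :
    (sinusoidObservable a b φ).IsHermitian := by
  ext i j
  fin_cases i <;> fin_cases j <;> simp [sinusoidObservable, ← Complex.exp_conj]

theorem expectation_uniformState_sinusoidObservable (a b φ r θ : ℝ) :
    expectation (uniformState (Fin 2)) (sinusoidObservable a b φ) (scaledPauliZ r) θ =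
      a + b * Real.cos (2 * r * θ + φ) := by
  rw [expectation, scaledPauliZ, exp_smul_diagonal_mul_mul_exp_neg_smul_diagonal,
    star_uniformState_dotProduct_mulVec]
  simp only [sinusoidObservable, neg_mul, of_apply, cons_val', cons_val_fin_one,
    Fin.sum_univ_two, Fin.isValue, cons_val_zero, cons_val_one, sub_neg_eq_add, sub_self,
    mul_zero, exp_zero, one_mul, neg_add_cancel, Fintype.card_fin, Nat.cast_ofNat, div_ofNat_re,
    add_re, ofReal_re, mul_re, exp_re, I_re, zero_mul, I_im, ofReal_im, mul_im, zero_add, add_im,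
    add_zero, Real.exp_zero, mul_one, exp_im, sub_zero, sub_re, neg_re, sub_im, neg_im, neg_zero,
    Real.cos_neg, Real.sin_neg, mul_neg]
  rw [show θ * (-r - r) = -(2 * r * θ) by ring, show θ * (r + r) = 2 * r * θ by ring,
    Real.cos_neg, Real.sin_neg, Real.cos_add]
  ring

theorem hasDerivAt_const_add_mul_cos (a b k φ θ : ℝ) :
    HasDerivAt (fun θ => a + b * Real.cos (k * θ + φ)) (-(b * k * Real.sin (k * θ + φ))) θ := by
  refine ((((hasDerivAt_id' θ).const_mul k).add_const φ).cos.const_mul b).const_add a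
    |>.congr_deriv ?_
  ring

theorem stmt_12 (r γ : ℝ) (hr : 0 < r) (hγ : 0 < γ) (hγ' : γ < Real.pi / r) :
    ¬ ∃ g : ℝ → ℝ → ℝ,
      ∀ (ψ : Fin 2 → ℂ), star ψ ⬝ᵥ ψ = 1 →
      ∀ (A G : Matrix (Fin 2) (Fin 2) ℂ), A.IsHermitian → G.IsHermitian →
        G * G = ((r : ℂ) ^ 2) • (1 : Matrix (Fin 2) (Fin 2) ℂ) →
      ∀ f : ℝ → ℝ,
        (∀ θ : ℝ, f θ =
          (star ψ ⬝ᵥ ((NormedSpace.exp ((Complex.I * (θ : ℂ)) • G) * A *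
            NormedSpace.exp ((-(Complex.I * (θ : ℂ))) • G)) *ᵥ ψ)).re) →
      ∀ θ : ℝ, 0 ≤ θ → θ < Real.pi / r →
        g (f θ) (f (θ + γ)) = deriv f θ := by
  rintro ⟨g, hg⟩
  have shift_rule (a b φ : ℝ) :
      g (a + b * Real.cos φ) (a + b * Real.cos (2 * r * γ + φ)) = -(b * (2 * r) * Real.sin φ) := by
    have h := hg (uniformState (Fin 2)) star_uniformState_dotProduct_self _ _
      (sinusoidObservable_isHermitian a b φ) (scaledPauliZ_isHermitian r)
      (scaledPauliZ_mul_self r) _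
      (fun θ => (expectation_uniformState_sinusoidObservable a b φ r θ).symm)
      0 le_rfl (hγ.trans hγ')
    simpa [(hasDerivAt_const_add_mul_cos a b (2 * r) φ 0).deriv] using h
  have h_const := shift_rule (Real.cos (r * γ)) 0 0
  have h_cos := shift_rule 0 1 (-(r * γ))
  rw [show 2 * r * γ + -(r * γ) = r * γ by ring] at h_cos
  simp only [zero_mul, add_zero, neg_zero, zero_add, one_mul, Real.cos_neg, Real.sin_neg]
    at h_const h_cos
  have h_sin : 0 < Real.sin (r * γ) :=
    Real.sin_pos_of_pos_of_lt_pi (by positivity) (by rwa [lt_div_iff₀ hr, mul_comm] at hγ')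
  nlinarith
end
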